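/- arXiv:math/0603075 — 2 statements merged into one kernel-verified Lean document; each statement's English description precedes it below -/
import Mathlib

section
/- For every k ∈ ℕ and every α ∈ [0, π], (P_k^0(cos α))^2 + 2 · Σ_{m=1}^{k} ((k−m)!/(k+m)!) · (P_k^m(cos α))^2 = 1, where P_k^m denotes the m-th associated Legendre function of degree k. -/
open MeasureTheory Real

noncomputable def legendreP (n : ℕ) : Polynomial ℝ :=
  Polynomial.C ((2 ^ n * n.factorial : ℝ))⁻¹ *
    (Polynomial.derivative^[n] ((Polynomial.X ^ 2 - 1) ^ n))

noncomputable def assocP (n m : ℕ) (x : ℝ) : ℝ :=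
  (-1 : ℝ) ^ m * (1 - x ^ 2) ^ ((m : ℝ) / 2) *
    (Polynomial.derivative^[m] (legendreP n)).eval x

noncomputable def sphY (ℓ : ℕ) (m : ℤ) (θ φ : ℝ) : ℝ :=
  if m = 0 then Real.sqrt (2 * ℓ + 1) * assocP ℓ 0 (Real.cos θ)
  else if 0 < m then
    Real.sqrt (2 * (2 * ℓ + 1) * ((ℓ - m.toNat).factorial : ℝ) / ((ℓ + m.toNat).factorial : ℝ)) *
      assocP ℓ m.toNat (Real.cos θ) * Real.cos ((m : ℝ) * φ)
  else
    Real.sqrt (2 * (2 * ℓ + 1) * ((ℓ - (-m).toNat).factorial : ℝ) / ((ℓ + (-m).toNat).factorial : ℝ)) *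
      assocP ℓ (-m).toNat (Real.cos θ) * Real.sin (((-m : ℤ) : ℝ) * φ)

noncomputable def fvec (d : ℕ) (j : Fin ((d + 1) ^ 2)) (θ φ : ℝ) : ℝ :=
  sphY (Nat.sqrt j) ((j : ℤ) - (Nat.sqrt j : ℤ) ^ 2 - (Nat.sqrt j : ℤ)) θ φ

noncomputable def infoMat (d : ℕ) (ξ : Measure (ℝ × ℝ)) :
    Matrix (Fin ((d + 1) ^ 2)) (Fin ((d + 1) ^ 2)) ℝ :=
  fun i j => ∫ z, fvec d i z.1 z.2 * fvec d j z.1 z.2 ∂ξ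

noncomputable def unifSphere : Measure (ℝ × ℝ) :=
  ((volume.restrict (Set.Icc 0 π)).withDensity
      (fun θ => ENNReal.ofReal (Real.sin θ / (4 * π)))).prod
    (volume.restrict (Set.Ioc (-π) π))

/-! Write `Q m` for the `m`-th derivative of `P_k` and `w m = (k - m)! / (k + m)!`. Differentiating
Rodrigues' formula gives `(1 - x²) Q (m+2) - 2 (m+1) x Q (m+1) + (k - m)(k + m + 1) Q m = 0`,
and since `w m = (k - m)(k + m + 1) w (m+1)` this makes the derivative of
`T m = w m (1 - x²)^m (Q m)²` telescope: `T 0' = 2 B 0` and `T (m+1)' = B (m+1) - B m` with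
`B m = w m (1 - x²)^m Q m Q (m+1)`. Hence `T 0 + 2 ∑_{m=1}^k T m` has derivative `2 B k = 0`,
as `Q (k+1) = 0`; so it is the constant polynomial `T 0 (1) = P_k(1)² = 1`.
For `|x| ≤ 1`, `T m (x) = w m (P_k^m(x))²`. -/

open Polynomial

section X_sq_sub_one

variable {R : Type*} [CommRing R]

theorem iterate_derivative_succ_X_sq_sub_one_mul_derivative (q : R[X]) (n : ℕ) :
    derivative^[n + 1] ((X ^ 2 - 1) * derivative q) =
      (X ^ 2 - 1) * derivative^[n + 2] q + (2 * (n + 1) : R[X]) * X * derivative^[n + 1] q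
        + (n * (n + 1) : R[X]) * derivative^[n] q := by
  induction n with
  | zero => simp [derivative_mul]; ring
  | succ n ih =>
    rw [Function.iterate_succ_apply', ih]
    simp only [Function.iterate_succ_apply', derivative_add, derivative_mul, derivative_sub,
      derivative_X_sq, derivative_X, derivative_one, derivative_natCast, derivative_ofNat,
      Nat.cast_add, Nat.cast_one, map_ofNat]
    ring

theorem X_sq_sub_one_mul_derivative_pow (k : ℕ) :
    ((X : R[X]) ^ 2 - 1) * derivative ((X ^ 2 - 1) ^ k) =
      (2 * k : R[X]) * (X * (X ^ 2 - 1) ^ k) := by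
  rcases k with _ | k
  · simp
  · rw [derivative_pow_succ, derivative_sub, derivative_X_pow, derivative_one]
    simp only [map_add, map_natCast, map_one, Nat.cast_add, Nat.cast_one]
    ring

theorem eval_one_iterate_derivative_X_sq_sub_one_pow (n : ℕ) :
    (derivative^[n] (((X : R[X]) ^ 2 - 1) ^ n)).eval 1 = (2 ^ n * n.factorial : R) := by
  have hfactor : ((X : R[X]) ^ 2 - 1) ^ n = (X - C (1 : R)) ^ n * (X + C 1) ^ n := by
    rw [← mul_pow, C_1]; ring
  rw [hfactor, iterate_derivative_mul, eval_finsetSum, Finset.sum_eq_single 0]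
  · rw [Nat.sub_zero, iterate_derivative_X_sub_pow_self]
    simp
    ring
  · intro i hi hi0
    rw [iterate_derivative_X_sub_pow, Nat.sub_sub_self (Finset.mem_range_succ_iff.mp hi)]
    simp [zero_pow hi0]
  · simp

theorem iterate_derivative_X_sq_sub_one_pow_ode (k m : ℕ) :
    (X ^ 2 - 1) * derivative^[k + m + 2] (((X : R[X]) ^ 2 - 1) ^ k)
      + (2 * (m + 1) : R[X]) * X * derivative^[k + m + 1] ((X ^ 2 - 1) ^ k)
      + (m * (m + 1) - k * (k + 1) : R[X]) * derivative^[k + m] ((X ^ 2 - 1) ^ k) = 0 := by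
  have h := congrArg (derivative^[k + m + 1]) (X_sq_sub_one_mul_derivative_pow (R := R) k)
  rw [iterate_derivative_succ_X_sq_sub_one_mul_derivative,
    show (2 * k : R[X]) * (X * (X ^ 2 - 1) ^ k) = ((2 * k : ℕ) : R[X]) * ((X ^ 2 - 1) ^ k * X) by
      push_cast; ring,
    iterate_derivative_natCast_mul, iterate_derivative_mul_X, Nat.add_sub_cancel,
    nsmul_eq_mul] at h
  push_cast at h
  linear_combination h

end X_sq_sub_one

theorem iterate_derivative_legendreP (k m : ℕ) :
    derivative^[m] (legendreP k) =
      C ((2 ^ k * k.factorial : ℝ))⁻¹ * derivative^[k + m] ((X ^ 2 - 1) ^ k) := by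
  rw [legendreP, iterate_derivative_C_mul, ← Function.iterate_add_apply, add_comm]

theorem iterate_derivative_legendreP_ode (k m : ℕ) :
    (X ^ 2 - 1) * derivative^[m + 2] (legendreP k)
      + (2 * (m + 1) : ℝ[X]) * X * derivative^[m + 1] (legendreP k)
      + (m * (m + 1) - k * (k + 1) : ℝ[X]) * derivative^[m] (legendreP k) = 0 := by
  simp only [iterate_derivative_legendreP, ← add_assoc]
  linear_combination
    C ((2 ^ k * k.factorial : ℝ))⁻¹ * iterate_derivative_X_sq_sub_one_pow_ode (R := ℝ) k m

theorem legendreP_eval_one (k : ℕ) : (legendreP k).eval 1 = 1 := by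
  rw [legendreP, eval_mul, eval_C, eval_one_iterate_derivative_X_sq_sub_one_pow,
    inv_mul_cancel₀ (by positivity)]

theorem natDegree_legendreP_le (k : ℕ) : (legendreP k).natDegree ≤ k := by
  have hsq : ((X : ℝ[X]) ^ 2 - 1).natDegree ≤ 2 :=
    (natDegree_sub_le _ _).trans (by simp)
  have hpow : (((X : ℝ[X]) ^ 2 - 1) ^ k).natDegree ≤ k * 2 :=
    natDegree_pow_le.trans (Nat.mul_le_mul_left k hsq)
  refine (natDegree_C_mul_le _ _).trans ((natDegree_iterate_derivative _ _).trans ?_)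
  omega

theorem iterate_derivative_legendreP_succ_self (k : ℕ) :
    derivative^[k + 1] (legendreP k) = 0 :=
  iterate_derivative_eq_zero (Nat.lt_succ_of_le (natDegree_legendreP_le k))

noncomputable def legendreWeight (k m : ℕ) : ℝ :=
  ((k - m).factorial : ℝ) / ((k + m).factorial : ℝ)

theorem legendreWeight_zero (k : ℕ) : legendreWeight k 0 = 1 := by
  simp [legendreWeight, Nat.factorial_ne_zero]

theorem legendreWeight_eq_mul_succ {k m : ℕ} (h : m < k) :
    legendreWeight k m = ((k + m + 1) * (k - m) : ℝ) * legendreWeight k (m + 1) := by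
  obtain ⟨j, rfl⟩ := Nat.exists_eq_add_of_lt h
  rw [legendreWeight, legendreWeight, show m + j + 1 - m = j + 1 by omega,
    show m + j + 1 - (m + 1) = j by omega, show m + j + 1 + (m + 1) = m + j + 1 + m + 1 by omega,
    Nat.factorial_succ j, Nat.factorial_succ (m + j + 1 + m)]
  push_cast
  field_simp
  ring

noncomputable def legendreSqTerm (k m : ℕ) : ℝ[X] :=
  C (legendreWeight k m) * ((1 - X ^ 2) ^ m * (derivative^[m] (legendreP k)) ^ 2)

noncomputable def legendreCrossTerm (k m : ℕ) : ℝ[X] :=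
  C (legendreWeight k m) *
    ((1 - X ^ 2) ^ m * (derivative^[m] (legendreP k) * derivative^[m + 1] (legendreP k)))

noncomputable def legendreSqSum (k : ℕ) : ℝ[X] :=
  legendreSqTerm k 0 + 2 * ∑ m ∈ Finset.Icc 1 k, legendreSqTerm k m

theorem derivative_legendreSqTerm_zero (k : ℕ) :
    derivative (legendreSqTerm k 0) = 2 * legendreCrossTerm k 0 := by
  simp only [legendreSqTerm, legendreCrossTerm, derivative_C_mul, pow_zero, one_mul,
    derivative_sq, Function.iterate_succ_apply', Function.iterate_zero_apply, map_ofNat]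
  ring

theorem derivative_legendreSqTerm_succ {k m : ℕ} (h : m < k) :
    derivative (legendreSqTerm k (m + 1)) =
      legendreCrossTerm k (m + 1) - legendreCrossTerm k m := by
  have hode := iterate_derivative_legendreP_ode k m
  simp only [legendreSqTerm, legendreCrossTerm, legendreWeight_eq_mul_succ h, C_mul]
  simp only [derivative_mul, derivative_C, derivative_X, derivative_one, derivative_pow_succ,
    Function.iterate_succ_apply', map_natCast, map_add, map_sub, map_one] at hode ⊢
  push_cast at hode ⊢
  linear_combination (-C (legendreWeight k (m + 1)) * (1 - X ^ 2) ^ m *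
    derivative (derivative^[m] (legendreP k))) * hode

theorem legendreCrossTerm_self (k : ℕ) : legendreCrossTerm k k = 0 := by
  rw [legendreCrossTerm, iterate_derivative_legendreP_succ_self, mul_zero, mul_zero, mul_zero]

theorem derivative_legendreSqSum (k : ℕ) : derivative (legendreSqSum k) = 0 := by
  rw [legendreSqSum, ← Finset.Ico_add_one_right_eq_Icc, Finset.sum_Ico_eq_sum_range,
    Nat.add_sub_cancel]
  simp only [derivative_add, derivative_mul, derivative_ofNat, zero_mul, zero_add,
    derivative_sum, add_comm 1, Finset.sum_congr rfl fun m hm =>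
      derivative_legendreSqTerm_succ (Finset.mem_range.mp hm),
    Finset.sum_range_sub fun m => legendreCrossTerm k m, legendreCrossTerm_self,
    derivative_legendreSqTerm_zero]
  ring

theorem legendreSqSum_eq_one (k : ℕ) : legendreSqSum k = 1 := by
  have hconst := eq_C_of_derivative_eq_zero (derivative_legendreSqSum k)
  have hvanish : ∀ m ∈ Finset.Icc 1 k, (legendreSqTerm k m).eval 1 = 0 := fun m hm => by
    simp [legendreSqTerm, Nat.one_le_iff_ne_zero.mp (Finset.mem_Icc.mp hm).1]
  have heval : (legendreSqSum k).eval 1 = 1 := by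
    rw [legendreSqSum, eval_add, eval_mul, eval_finsetSum, Finset.sum_eq_zero hvanish]
    simp [legendreSqTerm, legendreWeight_zero, legendreP_eval_one]
  rw [hconst, eval_C] at heval
  rw [hconst, heval, C_1]

theorem assocP_sq (n m : ℕ) {x : ℝ} (hx : x ^ 2 ≤ 1) :
    assocP n m x ^ 2 = (1 - x ^ 2) ^ m * ((derivative^[m] (legendreP n)).eval x) ^ 2 := by
  have hhalf : ((1 - x ^ 2) ^ ((m : ℝ) / 2)) ^ 2 = (1 - x ^ 2) ^ m := by
    rw [← Real.rpow_natCast _ 2, ← Real.rpow_mul (by linarith), ← Real.rpow_natCast]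
    norm_num
  rw [assocP, mul_pow, mul_pow, hhalf, ← pow_mul, mul_comm m, pow_mul]
  norm_num

theorem legendre_addition_special_general (k : ℕ) (α : ℝ) :
    (assocP k 0 (Real.cos α)) ^ 2 +
      2 * ∑ m ∈ Finset.Icc 1 k,
        (((k - m).factorial : ℝ) / ((k + m).factorial : ℝ)) * (assocP k m (Real.cos α)) ^ 2
    = 1 := by
  calc _ = (legendreSqSum k).eval (Real.cos α) := by
        simp [legendreSqSum, legendreSqTerm, eval_finsetSum, legendreWeight, Nat.factorial_ne_zero,
          assocP_sq _ _ (Real.cos_sq_le_one α)]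
    _ = 1 := by rw [legendreSqSum_eq_one, eval_one]

/-- Addition-theorem special case: for every `k : ℕ` and `α ∈ [0, π]`,
`(P_k^0(cos α))² + 2 ∑_{m=1}^k ((k-m)!/(k+m)!) (P_k^m(cos α))² = 1`. -/
theorem legendre_addition_special (k : ℕ) (α : ℝ) (hα : α ∈ Set.Icc (0 : ℝ) π) :
    (assocP k 0 (Real.cos α)) ^ 2 +
      2 * ∑ m ∈ Finset.Icc 1 k,
        (((k - m).factorial : ℝ) / ((k + m).factorial : ℝ)) * (assocP k m (Real.cos α)) ^ 2
    = 1 :=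
  legendre_addition_special_general k α
end

section
/- Minimal-support characterization: among all probability measures η = Σ_{j=1}^N w_j δ_{x_j} on [−1,1] satisfying Σ_j w_j x_j^ℓ = (1/2)∫_{−1}^1 x^ℓ dx for ℓ = 0,...,n, the minimal value of u(η) = min{v ≥ 0 : supp η ⊆ [−v, v]} equals |x_1*|, where x_1* is the smallest zero of the Legendre polynomial P_r with r = ⌊n/2⌋ + 1; the minimum is attained by the Gauss–Legendre quadrature measure supported at the zeros of P_r. -/
open MeasureTheory Real

/-!
Write `P = legendreP r`. Rodrigues' formula and `r` integrations by parts make `P` orthogonal on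
`[-1, 1]` to every polynomial of degree `< r`, and `P(-t) = (-1)^r P(t)`. By Rolle, the `r`-th
derivative of `(X² - 1)^r` has all its `r` roots real; they are simple and lie in `(-1, 1)`, since
`P = g * S` with `g ≥ 0` on `[-1, 1]` and `deg S < r` would give `∫ g S² = 0`.

Lower bound: if `x₁ < 0`, then `P = (X - x₁)(X + x₁) R` with `deg R = r - 2`, so
`∫ (x₁² - t²) R(t)² = 0` while `∫ R² > 0`. A positive quadrature exact in degree `2r - 2 ≤ n`
with all nodes in `(-|x₁|, |x₁|)` would turn the first identity into `R = 0` at every node, and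
then the second one fails.

Attainment: the interpolatory weights at the zeros of `P` are exact in degree `2r - 1` (divide by
`P`; the quotient is orthogonal to `P`), and positive because the weight at a zero `z` is the
normalized integral of the square of the Lagrange basis polynomial of `z`.
-/

open Polynomial

namespace Polynomial

variable {a b : ℝ}

theorem intervalIntegral_eval_pos {p : ℝ[X]} (hab : a < b) (hp : p ≠ 0)
    (hnn : ∀ t ∈ Set.Icc a b, 0 ≤ p.eval t) : 0 < ∫ t in a..b, p.eval t := by
  have hae : 0 ≤ᵐ[volume.restrict (Set.uIoc a b)] fun t => p.eval t := by
    refine ae_restrict_of_forall_mem measurableSet_uIoc fun t ht => hnn t ?_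
    rw [Set.uIoc_of_le hab.le] at ht
    exact Set.Ioc_subset_Icc_self ht
  rw [intervalIntegral.integral_pos_iff_support_of_nonneg_ae' hae
    (p.continuous.intervalIntegrable a b)]
  have hnull : volume (p.roots.toFinset : Set ℝ) = 0 := p.roots.toFinset.finite_toSet.measure_zero _
  refine ⟨hab, ?_⟩
  calc (0 : ENNReal) < volume (Set.Ioc a b) := by simp [hab]
    _ = volume (Set.Ioc a b \ p.roots.toFinset) := (measure_sdiff_null hnull).symm
    _ ≤ volume (Function.support (fun t => p.eval t) ∩ Set.Ioc a b) :=
      measure_mono fun t ht => ⟨by simpa [hp] using ht.2, ht.1⟩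

theorem intervalIntegral_eval_add (p q : ℝ[X]) :
    ∫ t in a..b, (p + q).eval t = (∫ t in a..b, p.eval t) + ∫ t in a..b, q.eval t := by
  simp only [eval_add]
  exact intervalIntegral.integral_add (p.continuous.intervalIntegrable a b)
    (q.continuous.intervalIntegrable a b)

theorem intervalIntegral_eval_finsetSum {ι : Type*} (s : Finset ι) (p : ι → ℝ[X]) :
    ∫ t in a..b, (∑ i ∈ s, p i).eval t = ∑ i ∈ s, ∫ t in a..b, (p i).eval t := by
  simp only [eval_finsetSum]
  exact intervalIntegral.integral_finsetSum fun i _ => (p i).continuous.intervalIntegrable a b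

theorem intervalIntegral_derivative_mul {p q : ℝ[X]} (ha : p.IsRoot a) (hb : p.IsRoot b) :
    ∫ t in a..b, (derivative p * q).eval t = -∫ t in a..b, (p * derivative q).eval t := by
  have := intervalIntegral.integral_mul_deriv_eq_deriv_mul (fun t _ => q.hasDerivAt t)
    (fun t _ => p.hasDerivAt t) (q.derivative.continuous.intervalIntegrable a b)
    (p.derivative.continuous.intervalIntegrable a b)
  simp only [IsRoot.def] at ha hb
  simp only [eval_mul, ha, hb, mul_zero, sub_zero, zero_sub] at this ⊢
  simpa only [mul_comm] using this

theorem intervalIntegral_iterate_derivative_mul {F : ℝ[X]} {k : ℕ}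
    (hF : ∀ j < k, (derivative^[j] F).IsRoot a ∧ (derivative^[j] F).IsRoot b) (q : ℝ[X]) :
    ∫ t in a..b, (derivative^[k] F * q).eval t
      = (-1) ^ k * ∫ t in a..b, (F * derivative^[k] q).eval t := by
  induction k generalizing q with
  | zero => simp
  | succ k ih =>
    rw [Function.iterate_succ_apply', intervalIntegral_derivative_mul (hF k k.lt_succ_self).1
      (hF k k.lt_succ_self).2, ih (fun j hj => hF j (hj.trans k.lt_succ_self)),
      Function.iterate_succ_apply]
    ring

theorem iterate_derivative_comp_neg_X {R : Type*} [CommRing R] (p : R[X]) (k : ℕ) :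
    derivative^[k] (p.comp (-X)) = (-1) ^ k * (derivative^[k] p).comp (-X) := by
  induction k generalizing p with
  | zero => simp
  | succ k ih => simp [ih (derivative p), derivative_comp, pow_succ]

theorem card_roots_le_card_roots_iterate_derivative_add (p : ℝ[X]) (k : ℕ) :
    Multiset.card p.roots ≤ Multiset.card (derivative^[k] p).roots + k := by
  induction k with
  | zero => simp
  | succ k ih =>
    have := card_roots_le_derivative (derivative^[k] p)
    rw [Function.iterate_succ_apply']
    omega

end Polynomial

theorem sq_sub_one_eq_mul : (X ^ 2 - 1 : ℝ[X]) = (X - C 1) * (X - C (-1)) := by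
  simp only [map_neg, map_one, sub_neg_eq_add]
  ring

theorem sq_sub_one_ne_zero : (X ^ 2 - 1 : ℝ[X]) ≠ 0 := by
  rw [sq_sub_one_eq_mul]
  exact mul_ne_zero (X_sub_C_ne_zero 1) (X_sub_C_ne_zero (-1))

theorem card_roots_iterate_derivative_sq_sub_one_pow (m : ℕ) :
    Multiset.card (derivative^[m] ((X ^ 2 - 1 : ℝ[X]) ^ m)).roots = m ∧
      (derivative^[m] ((X ^ 2 - 1 : ℝ[X]) ^ m)).natDegree = m := by
  have hbase : ((X ^ 2 - 1 : ℝ[X]) ^ m).natDegree = 2 * m ∧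
      Multiset.card ((X ^ 2 - 1 : ℝ[X]) ^ m).roots = 2 * m := by
    have := pow_ne_zero m sq_sub_one_ne_zero
    rw [sq_sub_one_eq_mul, mul_pow] at this ⊢
    rw [roots_mul this, natDegree_mul (left_ne_zero_of_mul this) (right_ne_zero_of_mul this)]
    simp only [natDegree_pow, natDegree_X_sub_C, roots_pow, roots_X_sub_C, Multiset.card_add,
      Multiset.card_nsmul, Multiset.card_singleton]
    omega
  have hrolle := card_roots_le_card_roots_iterate_derivative_add ((X ^ 2 - 1 : ℝ[X]) ^ m) m
  have hroots := card_roots' (derivative^[m] ((X ^ 2 - 1 : ℝ[X]) ^ m))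
  have hdeg := natDegree_iterate_derivative ((X ^ 2 - 1 : ℝ[X]) ^ m) m
  omega

theorem legendreP_eq (m : ℕ) :
    legendreP m = C ((2 ^ m * m.factorial : ℝ))⁻¹ * derivative^[m] ((X ^ 2 - 1 : ℝ[X]) ^ m) :=
  rfl

theorem natDegree_legendreP (m : ℕ) : (legendreP m).natDegree = m := by
  rw [legendreP_eq, natDegree_C_mul (by positivity),
    (card_roots_iterate_derivative_sq_sub_one_pow m).2]

theorem card_roots_legendreP (m : ℕ) : Multiset.card (legendreP m).roots = m := by
  rw [legendreP_eq, roots_C_mul _ (by positivity),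
    (card_roots_iterate_derivative_sq_sub_one_pow m).1]

theorem legendreP_ne_zero (m : ℕ) : legendreP m ≠ 0 := by
  rcases m with _ | m
  · simp [legendreP]
  · exact ne_zero_of_natDegree_gt (n := 0) (by rw [natDegree_legendreP]; omega)

theorem integral_legendreP_mul_eq_zero {m : ℕ} {q : ℝ[X]} (hq : q.natDegree < m) :
    ∫ t in (-1 : ℝ)..1, (legendreP m * q).eval t = 0 := by
  have hF0 : (X ^ 2 - 1 : ℝ[X]) ^ m ≠ 0 := pow_ne_zero _ sq_sub_one_ne_zero
  have hmult : ∀ r : ℝ, (X - C r) ^ m ∣ (X ^ 2 - 1 : ℝ[X]) ^ m → ∀ j < m,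
      (derivative^[j] ((X ^ 2 - 1 : ℝ[X]) ^ m)).IsRoot r := fun r hr j hj =>
    isRoot_iterate_derivative_of_lt_rootMultiplicity
      (hj.trans_le ((le_rootMultiplicity_iff hF0).2 hr))
  have hboundary : ∀ j < m, (derivative^[j] ((X ^ 2 - 1 : ℝ[X]) ^ m)).IsRoot (-1) ∧
      (derivative^[j] ((X ^ 2 - 1 : ℝ[X]) ^ m)).IsRoot 1 := fun j hj =>
    ⟨hmult (-1) (by rw [sq_sub_one_eq_mul, mul_pow]; exact dvd_mul_left _ _) j hj,
      hmult 1 (by rw [sq_sub_one_eq_mul, mul_pow]; exact dvd_mul_right _ _) j hj⟩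
  rw [legendreP_eq, mul_assoc]
  simp only [eval_C_mul, intervalIntegral.integral_const_mul]
  rw [intervalIntegral_iterate_derivative_mul hboundary, iterate_derivative_eq_zero hq]
  simp

theorem legendreP_eval_neg (m : ℕ) (t : ℝ) :
    (legendreP m).eval (-t) = (-1) ^ m * (legendreP m).eval t := by
  have hcomp : ((X ^ 2 - 1 : ℝ[X]) ^ m).comp (-X) = (X ^ 2 - 1) ^ m := by simp
  have hderiv := congrArg (eval t) (iterate_derivative_comp_neg_X ((X ^ 2 - 1 : ℝ[X]) ^ m) m)
  rw [hcomp] at hderiv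
  simp only [eval_mul, eval_comp, eval_pow, eval_neg, eval_X, eval_one] at hderiv
  have hsq : ((-1 : ℝ) ^ m) * (-1) ^ m = 1 := by rw [← mul_pow]; norm_num
  simp only [legendreP_eq, eval_mul, eval_C, hderiv]
  linear_combination (-((2 ^ m * m.factorial : ℝ)⁻¹ *
    eval (-t) (derivative^[m] ((X ^ 2 - 1 : ℝ[X]) ^ m)))) * hsq

theorem not_dvd_legendreP {m : ℕ} {g : ℝ[X]} (hg : 0 < g.natDegree)
    (hnn : ∀ t ∈ Set.Icc (-1 : ℝ) 1, 0 ≤ g.eval t) : ¬g ∣ legendreP m := by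
  rintro ⟨S, hS⟩
  have hg0 : g ≠ 0 := ne_zero_of_natDegree_gt hg
  have hS0 : S ≠ 0 := by
    rintro rfl
    exact legendreP_ne_zero m (by rw [hS, mul_zero])
  have hSdeg : S.natDegree < m := by
    have := natDegree_legendreP m
    rw [hS, natDegree_mul hg0 hS0] at this
    omega
  have hzero := integral_legendreP_mul_eq_zero hSdeg
  rw [hS] at hzero
  have hpos : 0 < ∫ t in (-1 : ℝ)..1, (g * S * S).eval t := by
    refine intervalIntegral_eval_pos (by norm_num) (mul_ne_zero (mul_ne_zero hg0 hS0) hS0)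
      fun t ht => ?_
    rw [eval_mul, eval_mul, mul_assoc]
    exact mul_nonneg (hnn t ht) (mul_self_nonneg _)
  exact hpos.ne' hzero

theorem nodup_roots_legendreP (m : ℕ) : (legendreP m).roots.Nodup := by
  classical
  refine Multiset.nodup_iff_count_le_one.2 fun r => ?_
  rw [count_roots]
  by_contra! h
  refine not_dvd_legendreP (g := (X - C r) ^ 2) (by simp) (fun t _ => ?_)
    ((le_rootMultiplicity_iff (legendreP_ne_zero m)).1 h)
  simp only [eval_pow, eval_sub, eval_X, eval_C]
  positivity

theorem mem_Ioo_of_mem_roots_legendreP {m : ℕ} {r : ℝ} (hr : r ∈ (legendreP m).roots) :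
    r ∈ Set.Ioo (-1 : ℝ) 1 := by
  have hdvd : X - C r ∣ legendreP m := dvd_iff_isRoot.2 (isRoot_of_mem_roots hr)
  by_contra hout
  rcases le_or_gt r (-1) with hle | hgt
  · refine not_dvd_legendreP (by simp) (fun t ht => ?_) hdvd
    simp only [eval_sub, eval_X, eval_C]
    linarith [ht.1]
  · have hge : 1 ≤ r := by
      by_contra! hlt
      exact hout ⟨hgt, hlt⟩
    refine not_dvd_legendreP (g := -(X - C r)) (by rw [natDegree_neg, natDegree_X_sub_C]; norm_num)
      (fun t ht => ?_) (neg_dvd.2 hdvd)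
    simp only [eval_neg, eval_sub, eval_X, eval_C]
    linarith [ht.2]

theorem exists_injective_roots_legendreP (m : ℕ) :
    ∃ z : Fin m → ℝ, Function.Injective z ∧
      ∀ i, z i ∈ Set.Ioo (-1 : ℝ) 1 ∧ (legendreP m).IsRoot (z i) := by
  have hcard : (legendreP m).roots.toFinset.card = m := by
    rw [Multiset.toFinset_card_of_nodup (nodup_roots_legendreP m), card_roots_legendreP]
  refine ⟨(legendreP m).roots.toFinset.orderEmbOfFin hcard,
    ((legendreP m).roots.toFinset.orderEmbOfFin hcard).injective, fun i => ?_⟩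
  have hmem := Multiset.mem_toFinset.1 ((legendreP m).roots.toFinset.orderEmbOfFin_mem hcard i)
  exact ⟨mem_Ioo_of_mem_roots_legendreP hmem, isRoot_of_mem_roots hmem⟩

section Quadrature

variable {ι : Type*} [Fintype ι]

def IsExactUpTo (n : ℕ) (x w : ι → ℝ) : Prop :=
  ∀ p : ℝ[X], p.natDegree ≤ n →
    ∑ i, w i * p.eval (x i) = (1 / 2) * ∫ t in (-1 : ℝ)..1, p.eval t

theorem isExactUpTo_iff_moments {n : ℕ} {x w : ι → ℝ} :
    IsExactUpTo n x w ↔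
      ∀ ℓ ≤ n, ∑ i, w i * x i ^ ℓ = (1 / 2) * ∫ t in (-1 : ℝ)..1, t ^ ℓ := by
  refine ⟨fun h ℓ hℓ => by simpa using h (X ^ ℓ) (by simpa using hℓ), fun h p hp => ?_⟩
  have hsum := as_sum_range_C_mul_X_pow' p (Nat.lt_succ_of_le hp)
  rw [hsum, intervalIntegral_eval_finsetSum]
  simp only [eval_finsetSum, eval_C_mul, eval_pow, eval_X, Finset.mul_sum,
    intervalIntegral.integral_const_mul]
  rw [Finset.sum_comm]
  refine Finset.sum_congr rfl fun ℓ hℓ => ?_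
  rw [mul_left_comm, ← h ℓ (Nat.lt_succ_iff.1 (Finset.mem_range.1 hℓ)), Finset.mul_sum]
  exact Finset.sum_congr rfl fun i _ => by ring

theorem IsExactUpTo.mono {n k : ℕ} {x w : ι → ℝ} (h : IsExactUpTo n x w) (hkn : k ≤ n) :
    IsExactUpTo k x w :=
  fun p hp => h p (hp.trans hkn)

theorem IsExactUpTo.nonempty {n : ℕ} {x w : ι → ℝ} (h : IsExactUpTo n x w) : Nonempty ι := by
  by_contra hempty
  rw [not_nonempty_iff] at hempty
  simpa using h 1 (by simp)

theorem IsExactUpTo.exists_eval_nonpos {n : ℕ} {x w : ι → ℝ} (h : IsExactUpTo n x w)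
    (hw : ∀ i, 0 < w i) {g R : ℝ[X]} (hR : R ≠ 0) (hgR : (g * R ^ 2).natDegree ≤ n)
    (hR2 : (R ^ 2).natDegree ≤ n) (hint : ∫ t in (-1 : ℝ)..1, (g * R ^ 2).eval t ≤ 0) :
    ∃ i, g.eval (x i) ≤ 0 := by
  by_contra! hg
  have hterm : ∀ i, 0 ≤ w i * (g * R ^ 2).eval (x i) := fun i => by
    rw [eval_mul, eval_pow]
    exact mul_nonneg (hw i).le (mul_nonneg (hg i).le (sq_nonneg _))
  have hsum : ∑ i, w i * (g * R ^ 2).eval (x i) = 0 :=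
    le_antisymm (by rw [h _ hgR]; linarith) (Finset.sum_nonneg fun i _ => hterm i)
  have hRx : ∀ i, R.eval (x i) = 0 := fun i => by
    have := (Finset.sum_eq_zero_iff_of_nonneg fun i _ => hterm i).1 hsum i (Finset.mem_univ i)
    rw [eval_mul, eval_pow] at this
    simpa [(hw i).ne', (hg i).ne'] using this
  have hpos := intervalIntegral_eval_pos (a := -1) (b := 1) (by norm_num) (pow_ne_zero 2 hR)
    fun t _ => by simpa using sq_nonneg (R.eval t)
  have := h _ hR2
  rw [Finset.sum_eq_zero fun i _ => by rw [eval_pow, hRx]; ring] at this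
  linarith

variable [DecidableEq ι]

noncomputable def gaussWeight (z : ι → ℝ) (i : ι) : ℝ :=
  (1 / 2) * ∫ t in (-1 : ℝ)..1, (Lagrange.basis Finset.univ z i).eval t

theorem sum_gaussWeight_mul_eval {z : ι → ℝ} (hz : Function.Injective z) {p : ℝ[X]}
    (hp : p.degree < Fintype.card ι) :
    ∑ i, gaussWeight z i * p.eval (z i) = (1 / 2) * ∫ t in (-1 : ℝ)..1, p.eval t := by
  have hinterp := Lagrange.eq_interpolate (s := Finset.univ) hz.injOn (by simpa using hp)
  conv_rhs => rw [hinterp, Lagrange.interpolate_apply, intervalIntegral_eval_finsetSum,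
    Finset.mul_sum]
  refine Finset.sum_congr rfl fun i _ => ?_
  simp only [gaussWeight, eval_C_mul, intervalIntegral.integral_const_mul]
  ring

theorem gaussWeight_isExactUpTo {z : ι → ℝ} (hz : Function.Injective z) [Nonempty ι] {P : ℝ[X]}
    (hdeg : P.natDegree = Fintype.card ι) (hroot : ∀ i, P.IsRoot (z i))
    (horth : ∀ q : ℝ[X], q.natDegree < Fintype.card ι → ∫ t in (-1 : ℝ)..1, (P * q).eval t = 0) :
    IsExactUpTo (2 * Fintype.card ι - 1) z (gaussWeight z) := by
  intro f hf
  have hP0 : P ≠ 0 := by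
    rintro rfl
    rw [natDegree_zero] at hdeg
    exact Fintype.card_ne_zero hdeg.symm
  have hdiv : P * (f / P) + f % P = f := EuclideanDomain.div_add_mod f P
  have hmod : (f % P).degree < Fintype.card ι := by
    simpa [degree_eq_natDegree hP0, hdeg] using degree_mod_lt f hP0
  have hquot : (f / P).natDegree < Fintype.card ι := by
    rcases eq_or_ne (f / P) 0 with h0 | h0
    · rw [h0, natDegree_zero]
      exact Fintype.card_pos
    have hmul : (P * (f / P)).natDegree ≤ f.natDegree := by
      rw [eq_sub_of_add_eq hdiv]
      refine (natDegree_sub_le _ _).trans (max_le le_rfl ?_)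
      rw [mod_def]
      exact natDegree_modByMonic_le_left
    rw [natDegree_mul hP0 h0, hdeg] at hmul
    have hcard := Fintype.card_pos (α := ι)
    omega
  calc ∑ i, gaussWeight z i * f.eval (z i) = ∑ i, gaussWeight z i * (f % P).eval (z i) := by
        refine Finset.sum_congr rfl fun i _ => ?_
        conv_lhs => rw [← hdiv]
        rw [eval_add, eval_mul, (hroot i).eq_zero, zero_mul, zero_add]
    _ = (1 / 2) * ∫ t in (-1 : ℝ)..1, (f % P).eval t := sum_gaussWeight_mul_eval hz hmod
    _ = (1 / 2) * ∫ t in (-1 : ℝ)..1, f.eval t := by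
        conv_rhs => rw [← hdiv, intervalIntegral_eval_add, horth _ hquot, zero_add]

theorem gaussWeight_pos {z : ι → ℝ} (hz : Function.Injective z) {P : ℝ[X]}
    (hdeg : P.natDegree = Fintype.card ι) (hroot : ∀ i, P.IsRoot (z i))
    (horth : ∀ q : ℝ[X], q.natDegree < Fintype.card ι → ∫ t in (-1 : ℝ)..1, (P * q).eval t = 0)
    (i : ι) : 0 < gaussWeight z i := by
  have : Nonempty ι := ⟨i⟩
  have hL := Lagrange.natDegree_basis (s := Finset.univ) hz.injOn (Finset.mem_univ i)
  have hexact := gaussWeight_isExactUpTo hz hdeg hroot horth (Lagrange.basis Finset.univ z i ^ 2)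
    (by rw [natDegree_pow, hL, Finset.card_univ]; omega)
  rw [Finset.sum_eq_single i (fun j _ hji => by
      rw [eval_pow, Lagrange.eval_basis_of_ne hji.symm (Finset.mem_univ j)]; ring) (by simp),
    eval_pow, Lagrange.eval_basis_self hz.injOn (Finset.mem_univ i), one_pow, mul_one] at hexact
  rw [hexact]
  have := intervalIntegral_eval_pos (a := -1) (b := 1) (by norm_num)
    (pow_ne_zero 2 (Lagrange.basis_ne_zero hz.injOn (Finset.mem_univ i)))
    fun t _ => by simpa using sq_nonneg ((Lagrange.basis Finset.univ z i).eval t)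
  linarith

end Quadrature

theorem abs_le_neg_of_isLeast_legendreP {m : ℕ} {x₁ : ℝ}
    (hx₁ : IsLeast {y : ℝ | (legendreP m).eval y = 0} x₁) {y : ℝ} (hy : (legendreP m).eval y = 0) :
    |y| ≤ -x₁ := by
  have hneg : (legendreP m).eval (-y) = 0 := by rw [legendreP_eval_neg, hy, mul_zero]
  exact abs_le.2 ⟨by linarith [(hx₁.2 hy : x₁ ≤ y)], by linarith [(hx₁.2 hneg : x₁ ≤ -y)]⟩

theorem IsExactUpTo.exists_abs_le_of_isLeast_legendreP {ι : Type*} [Fintype ι] {m : ℕ}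
    {x w : ι → ℝ} (h : IsExactUpTo (2 * m - 2) x w) (hw : ∀ i, 0 < w i) {x₁ : ℝ}
    (hx₁ : IsLeast {y : ℝ | (legendreP m).eval y = 0} x₁) : ∃ i, |x₁| ≤ |x i| := by
  have hx₁_nonpos : x₁ ≤ 0 := by
    linarith [(le_abs_self x₁).trans (abs_le_neg_of_isLeast_legendreP hx₁ hx₁.1)]
  rcases hx₁_nonpos.eq_or_lt with rfl | hx₁_neg
  · obtain ⟨i⟩ := h.nonempty
    exact ⟨i, by simp⟩
  have hroot : (legendreP m).IsRoot x₁ := hx₁.1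
  have hroot' : (legendreP m).IsRoot (-x₁) := by
    rw [IsRoot.def, legendreP_eval_neg, hx₁.1, mul_zero]
  obtain ⟨R, hR⟩ : (X - C x₁) * (X - C (-x₁)) ∣ legendreP m :=
    IsCoprime.mul_dvd (isCoprime_X_sub_C_of_isUnit_sub (ne_of_lt (by linarith)).isUnit)
      (dvd_iff_isRoot.2 hroot) (dvd_iff_isRoot.2 hroot')
  have hR0 : R ≠ 0 := by
    rintro rfl
    exact legendreP_ne_zero m (by rw [hR, mul_zero])
  have hRdeg : R.natDegree + 2 = m := by
    have := natDegree_legendreP m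
    rw [hR, natDegree_mul (mul_ne_zero (X_sub_C_ne_zero _) (X_sub_C_ne_zero _)) hR0,
      natDegree_mul (X_sub_C_ne_zero _) (X_sub_C_ne_zero _), natDegree_X_sub_C,
      natDegree_X_sub_C] at this
    omega
  have hgR : -((X - C x₁) * (X - C (-x₁))) * R ^ 2 = -(legendreP m * R) := by
    rw [hR]; ring
  obtain ⟨i, hi⟩ := h.exists_eval_nonpos hw hR0 (g := -((X - C x₁) * (X - C (-x₁))))
    (by
      rw [hgR, natDegree_neg, natDegree_mul (legendreP_ne_zero m) hR0, natDegree_legendreP]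
      omega)
    (by rw [natDegree_pow]; omega)
    (by rw [hgR]; simp only [eval_neg, intervalIntegral.integral_neg,
      integral_legendreP_mul_eq_zero (by omega : R.natDegree < m), neg_zero, le_refl])
  refine ⟨i, sq_le_sq.1 ?_⟩
  simp only [eval_neg, eval_mul, eval_sub, eval_X, eval_C] at hi
  nlinarith

/-- Minimal-support characterization (Lemma A.1): among all finitely supported probability
measures on `[-1,1]` with positive weights whose moments up to order `n` agree with the
normalized Lebesgue measure, the minimal half-length `u(η) = max_i |x_i|` of a symmetric
interval containing the support equals `|x₁*|`, where `x₁*` is the smallest zero of the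
Legendre polynomial `P_r`, `r = ⌊n/2⌋ + 1`; the minimum is attained by the Gauss–Legendre
measure supported at the zeros of `P_r`. -/
theorem minimal_support_quadrature (n : ℕ) (x₁ : ℝ)
    (hx₁ : IsLeast {y : ℝ | (legendreP (n / 2 + 1)).eval y = 0} x₁) :
    (∀ (N : ℕ) (x : Fin N → ℝ) (w : Fin N → ℝ),
        (∀ i, x i ∈ Set.Icc (-1 : ℝ) 1) → (∀ i, 0 < w i) →
        (∀ ℓ ≤ n, ∑ i, w i * x i ^ ℓ = (1 / 2) * ∫ t in (-1 : ℝ)..1, t ^ ℓ) →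
        ∃ i, |x₁| ≤ |x i|) ∧
    ∃ (x : Fin (n / 2 + 1) → ℝ) (w : Fin (n / 2 + 1) → ℝ),
      (∀ i, x i ∈ Set.Icc (-1 : ℝ) 1) ∧ (∀ i, 0 < w i) ∧
      (∀ ℓ ≤ n, ∑ i, w i * x i ^ ℓ = (1 / 2) * ∫ t in (-1 : ℝ)..1, t ^ ℓ) ∧
      (∀ i, (legendreP (n / 2 + 1)).eval (x i) = 0) ∧
      ∀ i, |x i| ≤ |x₁| := by
  refine ⟨fun N x w _ hw hmom => ?_, ?_⟩
  · exact ((isExactUpTo_iff_moments.2 hmom).mono (by omega)).exists_abs_le_of_isLeast_legendreP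
      hw hx₁
  obtain ⟨z, hz, hzroot⟩ := exists_injective_roots_legendreP (n / 2 + 1)
  have hdeg : (legendreP (n / 2 + 1)).natDegree = Fintype.card (Fin (n / 2 + 1)) := by
    rw [natDegree_legendreP, Fintype.card_fin]
  have horth : ∀ q : ℝ[X], q.natDegree < Fintype.card (Fin (n / 2 + 1)) →
      ∫ t in (-1 : ℝ)..1, (legendreP (n / 2 + 1) * q).eval t = 0 := fun q hq =>
    integral_legendreP_mul_eq_zero (by simpa using hq)
  have hroot i := (hzroot i).2
  have hexact := gaussWeight_isExactUpTo hz hdeg hroot horth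
  refine ⟨z, gaussWeight z, fun i => Set.Ioo_subset_Icc_self (hzroot i).1,
    gaussWeight_pos hz hdeg hroot horth, isExactUpTo_iff_moments.1 (hexact.mono ?_), hroot,
    fun i => (abs_le_neg_of_isLeast_legendreP hx₁ (hroot i)).trans (neg_le_abs x₁)⟩
  rw [Fintype.card_fin]
  omega
end
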